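/- If S = μ/λ is a strip of k-shapes, then ∂λ \ ∂μ is a horizontal strip (it has at most one cell in each column). -/

import Mathlib

open scoped Classical

/-! ## Basic objects: cells, partitions, hooks, `k`-boundary, `k`-shapes -/

abbrev Cell : Type := ℕ × ℕ

/-- A partition, encoded as a weakly decreasing, eventually zero function `ℕ → ℕ`
(rows are 0-indexed; a larger row index means a higher row, French convention). -/
def IsPartition (f : ℕ → ℕ) : Prop :=
  (∀ i j : ℕ, i ≤ j → f j ≤ f i) ∧ ∃ N : ℕ, ∀ i : ℕ, N ≤ i → f i = 0

/-- The cells of the Ferrers diagram of `f`: `(i, j)` with `j < f i` (0-indexed). -/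
def cellsOf (f : ℕ → ℕ) : Set Cell := {p : Cell | p.2 < f p.1}

/-- The conjugate: number of rows with at least `j + 1` cells. -/
noncomputable def conj (f : ℕ → ℕ) (j : ℕ) : ℕ := Nat.card {i : ℕ // j < f i}

/-- Hook length of the cell `p` of `f` (0-indexed version of
`(λ_i − j) + (λ^t_j − i) + 1`). -/
noncomputable def hook (f : ℕ → ℕ) (p : Cell) : ℕ :=
  (f p.1 - p.2) + (conj f p.2 - p.1) - 1

/-- The `k`-boundary: cells of `f` with hook length at most `k`. -/
def bdry (k : ℕ) (f : ℕ → ℕ) : Set Cell := {p : Cell | p ∈ cellsOf f ∧ hook f p ≤ k}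

/-- `k`-row shape: the number of cells of the `k`-boundary in row `i`. -/
noncomputable def rsK (k : ℕ) (f : ℕ → ℕ) (i : ℕ) : ℕ :=
  Nat.card {j : ℕ // (i, j) ∈ bdry k f}

/-- `k`-column shape: the number of cells of the `k`-boundary in column `j`. -/
noncomputable def csK (k : ℕ) (f : ℕ → ℕ) (j : ℕ) : ℕ :=
  Nat.card {i : ℕ // (i, j) ∈ bdry k f}

/-- A `k`-shape: a partition whose `k`-row shape and `k`-column shape are
weakly decreasing. -/
def IsKShape (k : ℕ) (f : ℕ → ℕ) : Prop :=
  IsPartition f ∧ (∀ i j : ℕ, i ≤ j → rsK k f j ≤ rsK k f i) ∧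
    ∀ i j : ℕ, i ≤ j → csK k f j ≤ csK k f i

/-- A `k`-core: a partition with no cell of hook length exactly `k`. -/
def IsKCore (k : ℕ) (f : ℕ → ℕ) : Prop :=
  IsPartition f ∧ ∀ p ∈ cellsOf f, hook f p ≠ k

/-! ## Strings and moves -/

/-- Diagonal index of a cell. -/
def diagIdx (p : Cell) : ℤ := (p.2 : ℤ) - (p.1 : ℤ)

/-- Two cells are contiguous when their diagonal indices differ by `k` or `k+1`. -/
def Contiguous (k : ℕ) (p q : Cell) : Prop :=
  (diagIdx p - diagIdx q).natAbs = k ∨ (diagIdx p - diagIdx q).natAbs = k + 1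

/-- `a` lists the cells of the skew shape `g / f` from top to bottom, with
successive cells contiguous and in strictly lower rows: a string. -/
def IsString (k : ℕ) (f g : ℕ → ℕ) (a : List Cell) : Prop :=
  IsPartition f ∧ IsPartition g ∧ (∀ i, f i ≤ g i) ∧ a ≠ [] ∧
    cellsOf g \ cellsOf f = {x : Cell | x ∈ a} ∧
    List.Chain' (fun x y : Cell => y.1 < x.1 ∧ Contiguous k x y) a

/-- `b` is the leftmost cell of the `k`-boundary of `f` in row `r`. -/
def IsLeftmostBdryInRow (k : ℕ) (f : ℕ → ℕ) (r : ℕ) (b : Cell) : Prop :=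
  b ∈ bdry k f ∧ b.1 = r ∧ ∀ c : ℕ, (r, c) ∈ bdry k f → b.2 ≤ c

/-- `b` is the bottom cell of the `k`-boundary of `f` in column `c`. -/
def IsBottomBdryInCol (k : ℕ) (f : ℕ → ℕ) (c : ℕ) (b : Cell) : Prop :=
  b ∈ bdry k f ∧ b.2 = c ∧ ∀ r : ℕ, (r, c) ∈ bdry k f → b.1 ≤ r

/-- The cell `b₀` (the leftmost boundary cell in the row of the top cell of the
string `a`) exists and has hook length exactly `k`. -/
def B0HookK (k : ℕ) (f : ℕ → ℕ) (a : List Cell) : Prop :=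
  ∃ h b : Cell, a.head? = some h ∧ IsLeftmostBdryInRow k f h.1 b ∧ hook f b = k

/-- The cell `b_ℓ` (the bottom boundary cell in the column of the bottom cell of
the string `a`) exists and has hook length exactly `k`. -/
def BlHookK (k : ℕ) (f : ℕ → ℕ) (a : List Cell) : Prop :=
  ∃ h b : Cell, a.getLast? = some h ∧ IsBottomBdryInCol k f h.2 b ∧ hook f b = k

def RowType (k : ℕ) (f : ℕ → ℕ) (a : List Cell) : Prop := B0HookK k f a ∧ ¬ BlHookK k f a

def ColType (k : ℕ) (f : ℕ → ℕ) (a : List Cell) : Prop := ¬ B0HookK k f a ∧ BlHookK k f a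

def CoverType (k : ℕ) (f : ℕ → ℕ) (a : List Cell) : Prop := ¬ B0HookK k f a ∧ ¬ BlHookK k f a

def CocoverType (k : ℕ) (f : ℕ → ℕ) (a : List Cell) : Prop := B0HookK k f a ∧ BlHookK k f a

/-- `k`-row shape extended to integer row indices (0 outside `ℕ`). -/
noncomputable def rsZ (k : ℕ) (f : ℕ → ℕ) (r : ℤ) : ℤ :=
  if 0 ≤ r then (rsK k f r.toNat : ℤ) else 0

/-- `k`-column shape extended to integer column indices (0 outside `ℕ`). -/
noncomputable def csZ (k : ℕ) (f : ℕ → ℕ) (c : ℤ) : ℤ :=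
  if 0 ≤ c then (csK k f c.toNat : ℤ) else 0

/-- The strings `a = g/f` and `b = g'/f'` are translates of each other: the
cells correspond under translation by a fixed vector `v`, the row/column shape
changes correspond under `v`, and corresponding modified rows/columns have the
same size. -/
def TranslateStrings (k : ℕ) (f g f' g' : ℕ → ℕ) (a b : List Cell) : Prop :=
  ∃ v : ℤ × ℤ, a.length = b.length ∧
    (∀ (i : ℕ) (x y : Cell), a[i]? = some x → b[i]? = some y →
      (y.1 : ℤ) = (x.1 : ℤ) + v.1 ∧ (y.2 : ℤ) = (x.2 : ℤ) + v.2) ∧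
    (∀ r : ℤ, rsZ k g r - rsZ k f r = rsZ k g' (r + v.1) - rsZ k f' (r + v.1) ∧
      (rsZ k g r ≠ rsZ k f r → rsZ k f r = rsZ k f' (r + v.1))) ∧
    (∀ c : ℤ, csZ k g c - csZ k f c = csZ k g' (c + v.2) - csZ k f' (c + v.2) ∧
      (csZ k g c ≠ csZ k f c → csZ k f c = csZ k f' (c + v.2)))

/-- The common data of a row or column move from `lam` to `mu`: a chain of
partitions `lam = shape 0 ⊂ shape 1 ⊂ ⋯ ⊂ shape rank = mu` whose successive
differences are strings of a common length that are translates of each other,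
with `lam` and `mu` both `k`-shapes. -/
structure PreMove (k : ℕ) (lam mu : ℕ → ℕ) where
  rank : ℕ
  len : ℕ
  rank_pos : 0 < rank
  len_pos : 0 < len
  shape : ℕ → ℕ → ℕ
  strs : ℕ → List Cell
  shape_zero : shape 0 = lam
  shape_rank : shape rank = mu
  src_kshape : IsKShape k lam
  tgt_kshape : IsKShape k mu
  isStr : ∀ i < rank, IsString k (shape i) (shape (i + 1)) (strs i)
  strLen : ∀ i < rank, (strs i).length = len
  translates : ∀ i < rank, ∀ j < rank,
    TranslateStrings k (shape i) (shape (i + 1)) (shape j) (shape (j + 1)) (strs i) (strs j)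

/-- A row move: all strings are row-type and their top cells occur in
consecutive columns from left to right. -/
def PreMove.IsRowMove {k : ℕ} {lam mu : ℕ → ℕ} (m : PreMove k lam mu) : Prop :=
  (∀ i < m.rank, RowType k (m.shape i) (m.strs i)) ∧
    ∀ i : ℕ, i + 1 < m.rank → ∀ x y : Cell,
      (m.strs i).head? = some x → (m.strs (i + 1)).head? = some y → y.2 = x.2 + 1

/-- A column move: all strings are column-type and their bottom cells occur in
consecutive rows from bottom to top. -/
def PreMove.IsColMove {k : ℕ} {lam mu : ℕ → ℕ} (m : PreMove k lam mu) : Prop :=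
  (∀ i < m.rank, ColType k (m.shape i) (m.strs i)) ∧
    ∀ i : ℕ, i + 1 < m.rank → ∀ x y : Cell,
      (m.strs i).getLast? = some x → (m.strs (i + 1)).getLast? = some y → y.1 = x.1 + 1

/-- A move is a row move or a column move. -/
def PreMove.IsMove {k : ℕ} {lam mu : ℕ → ℕ} (m : PreMove k lam mu) : Prop :=
  m.IsRowMove ∨ m.IsColMove

/-- There is a move from `lam` to `mu`. -/
def MoveRel (k : ℕ) (lam mu : ℕ → ℕ) : Prop := ∃ m : PreMove k lam mu, m.IsMove

/-- A `f`-addable corner: a cell outside `f` which together with `f` forms the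
diagram of a partition. -/
def IsAddableCorner (f : ℕ → ℕ) (x : Cell) : Prop :=
  x ∉ cellsOf f ∧ ∃ g : ℕ → ℕ, IsPartition g ∧ cellsOf g = cellsOf f ∪ {x}

/-! ## Strips -/

/-- The skew shape `g / f` has at most one cell in each column. -/
def OneCellPerCol (f g : ℕ → ℕ) : Prop :=
  ∀ x y : Cell, x ∈ cellsOf g \ cellsOf f → y ∈ cellsOf g \ cellsOf f → x.2 = y.2 → x = y

/-- The skew shape `g / f` has at most one cell in each row. -/
def OneCellPerRow (f g : ℕ → ℕ) : Prop :=
  ∀ x y : Cell, x ∈ cellsOf g \ cellsOf f → y ∈ cellsOf g \ cellsOf f → x.1 = y.1 → x = y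

/-- `mu / lam` is a strip of rank `r` of `k`-shapes: a horizontal strip such
that `rs(mu)/rs(lam)` is a horizontal strip and `cs(mu)/cs(lam)` is a vertical
strip, both of size `r`. -/
def IsStrip (k r : ℕ) (lam mu : ℕ → ℕ) : Prop :=
  IsKShape k lam ∧ IsKShape k mu ∧ (∀ i, lam i ≤ mu i) ∧ OneCellPerCol lam mu ∧
    (∀ i, rsK k lam i ≤ rsK k mu i) ∧ OneCellPerCol (rsK k lam) (rsK k mu) ∧
    (∀ j, csK k lam j ≤ csK k mu j) ∧ OneCellPerRow (csK k lam) (csK k mu) ∧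
    (∑ᶠ i : ℕ, (rsK k mu i - rsK k lam i)) = r ∧
    (∑ᶠ j : ℕ, (csK k mu j - csK k lam j)) = r

/-- `mu / lam` is a strip (of some rank). -/
def IsStripAny (k : ℕ) (lam mu : ℕ → ℕ) : Prop := ∃ r : ℕ, IsStrip k r lam mu

/-- A maximal strip: it admits no `lam`-augmentation move. -/
def MaximalStrip (k : ℕ) (lam mu : ℕ → ℕ) : Prop :=
  IsStripAny k lam mu ∧ ¬ ∃ nu : ℕ → ℕ, MoveRel k mu nu ∧ IsStripAny k lam nu

/-- A reverse-maximal strip `mu / rho`: there is no move from `rho` to a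
`k`-shape `rho'` with `mu / rho'` again a strip. -/
def ReverseMaximalStrip (k : ℕ) (rho mu : ℕ → ℕ) : Prop :=
  IsStripAny k rho mu ∧ ¬ ∃ rho' : ℕ → ℕ, MoveRel k rho rho' ∧ IsStripAny k rho' mu

/-- Adjoin the cell `a` at the end of its row. -/
def addCell (f : ℕ → ℕ) (a : Cell) : ℕ → ℕ := Function.update f a.1 (f a.1 + 1)

/-- A lower augmentable corner of the strip `mu / lam`: a `mu`-addable corner
`a` whose adjunction expels from the `k`-boundary a cell of `∂mu` in the row of
`a` and in a modified column of the strip. -/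
def LowerAugCorner (k : ℕ) (lam mu : ℕ → ℕ) (a : Cell) : Prop :=
  IsAddableCorner mu a ∧ ∃ b : Cell, b ∈ bdry k mu ∧ b.1 = a.1 ∧
    csK k mu b.2 = csK k lam b.2 + 1 ∧ k < hook (addCell mu a) b

/-- An upper augmentable corner of the strip `mu / lam`: a `mu`-addable corner
`a`, not lying directly on top of a cell of the strip, whose adjunction expels
from the `k`-boundary a cell of `∂mu` in the column of `a` and in a modified
row of the strip. -/
def UpperAugCorner (k : ℕ) (lam mu : ℕ → ℕ) (a : Cell) : Prop :=
  IsAddableCorner mu a ∧ (a.1 = 0 ∨ (a.1 - 1, a.2) ∉ cellsOf mu \ cellsOf lam) ∧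
    ∃ b : Cell, b ∈ bdry k mu ∧ b.2 = a.2 ∧
      rsK k mu b.1 = rsK k lam b.1 + 1 ∧ k < hook (addCell mu a) b

/-! ## Paths in the `k`-shape poset and their equivalence -/

/-- Charge of a step from `f` to `g`: 0 for a row move or an empty move, the
number of cells for a column move. -/
noncomputable def stepCharge (k : ℕ) (f g : ℕ → ℕ) : ℕ :=
  if ∃ m : PreMove k f g, m.IsColMove then (cellsOf g \ cellsOf f).ncard else 0

/-- A path in the `k`-shape poset from `lam` to `nu`, recorded by its list of
vertices; each step is an empty move or a move. -/
def IsPathList (k : ℕ) (lam nu : ℕ → ℕ) (p : List (ℕ → ℕ)) : Prop :=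
  p.head? = some lam ∧ p.getLast? = some nu ∧
    List.Chain' (fun f g => f = g ∨ MoveRel k f g) p

/-- The charge of a path: the sum of the charges of its steps. -/
noncomputable def pathCharge (k : ℕ) (p : List (ℕ → ℕ)) : ℕ :=
  (List.zipWith (stepCharge k) p p.tail).sum

/-- The equivalence on paths generated by diamond equivalences (and by
insertion of empty moves). -/
inductive PathEquiv (k : ℕ) : List (ℕ → ℕ) → List (ℕ → ℕ) → Prop
  | refl (p : List (ℕ → ℕ)) : PathEquiv k p p
  | symm {p q : List (ℕ → ℕ)} : PathEquiv k p q → PathEquiv k q p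
  | trans {p q r : List (ℕ → ℕ)} : PathEquiv k p q → PathEquiv k q r → PathEquiv k p r
  | pad (pre post : List (ℕ → ℕ)) (κ : ℕ → ℕ) :
      PathEquiv k (pre ++ κ :: post) (pre ++ κ :: κ :: post)
  | diamond (pre post : List (ℕ → ℕ)) (κ μ ν γ : ℕ → ℕ)
      (h1 : κ = μ ∨ MoveRel k κ μ) (h2 : μ = γ ∨ MoveRel k μ γ)
      (h3 : κ = ν ∨ MoveRel k κ ν) (h4 : ν = γ ∨ MoveRel k ν γ)
      (hcells : (cellsOf μ \ cellsOf κ) ∪ (cellsOf γ \ cellsOf μ)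
          = (cellsOf ν \ cellsOf κ) ∪ (cellsOf γ \ cellsOf ν))
      (hcharge : stepCharge k κ μ + stepCharge k μ γ = stepCharge k κ ν + stepCharge k ν γ) :
      PathEquiv k (pre ++ κ :: μ :: γ :: post) (pre ++ κ :: ν :: γ :: post)

/-- The type of paths in the `k`-shape poset from `lam` to `nu`. -/
def PathsTo (k : ℕ) (lam nu : ℕ → ℕ) : Type :=
  {p : List (ℕ → ℕ) // IsPathList k lam nu p}

def kPathSetoid (k : ℕ) (lam nu : ℕ → ℕ) : Setoid (PathsTo k lam nu) where
  r p q := PathEquiv k p.1 q.1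
  iseqv := ⟨fun p => PathEquiv.refl p.1, fun h => PathEquiv.symm h,
    fun h h' => PathEquiv.trans h h'⟩

/-- Equivalence classes of paths from `lam` to `nu` in the `k`-shape poset. -/
def Patheq (k : ℕ) (lam nu : ℕ → ℕ) : Type := Quotient (kPathSetoid k lam nu)

/-! ## Tableaux -/

/-- A step of a `k`-shape tableau: a strip of rank strictly less than `k`. -/
def StripStep (k : ℕ) (f g : ℕ → ℕ) : Prop := ∃ r : ℕ, r < k ∧ IsStrip k r f g

/-- A `k`-shape tableau of shape `mu / lam`, recorded by its chain of shapes. -/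
def IsTableau (k : ℕ) (lam mu : ℕ → ℕ) (T : List (ℕ → ℕ)) : Prop :=
  T.head? = some lam ∧ T.getLast? = some mu ∧ List.Chain' (StripStep k) T

/-- A maximal `k`-shape tableau: each of its strips is maximal. -/
def IsMaxTableau (k : ℕ) (lam mu : ℕ → ℕ) (T : List (ℕ → ℕ)) : Prop :=
  IsTableau k lam mu T ∧ List.Chain' (MaximalStrip k) T

/-- A reverse-maximal `k`-shape tableau: each of its strips is reverse-maximal. -/
def IsRevMaxTableau (k : ℕ) (lam mu : ℕ → ℕ) (T : List (ℕ → ℕ)) : Prop :=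
  IsTableau k lam mu T ∧ List.Chain' (ReverseMaximalStrip k) T

/-- The rank of the strip `g / f`. -/
noncomputable def stripRank (k : ℕ) (f g : ℕ → ℕ) : ℕ :=
  ∑ᶠ i : ℕ, (rsK k g i - rsK k f i)

/-- The weight of a tableau: the list of ranks of its strips. -/
noncomputable def tabWeight (k : ℕ) (T : List (ℕ → ℕ)) : List ℕ :=
  List.zipWith (stripRank k) T T.tail

/-- The indent of a cell `b` in the skew shape `mu / lam`: the number of its
cells strictly to the left of `b` in the row of `b`. -/
noncomputable def indent (lam mu : ℕ → ℕ) (b : Cell) : ℕ :=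
  Nat.card {x : Cell // x ∈ cellsOf mu \ cellsOf lam ∧ x.1 = b.1 ∧ x.2 < b.2}

/-- A `lam`-augmentation path from `mu` to `nu`: a path in the `k`-shape poset
all of whose vertices `rho` satisfy that `rho / lam` is a strip. -/
def IsAugPath (k : ℕ) (lam mu nu : ℕ → ℕ) (p : List (ℕ → ℕ)) : Prop :=
  IsPathList k mu nu p ∧ ∀ rho ∈ p, IsStripAny k lam rho
/-!
Within a column `j` of a partition the hook length decreases going up, so the cells of the
`k`-boundary in that column are exactly its top `csK k f j` cells: row `i` belongs to it iff
`conj f j - csK k f j ≤ i < conj f j`. A cell of `∂λ \ ∂μ` in column `j` therefore lies in rows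
`conj λ j - csK k λ j ≤ i < conj μ j - csK k μ j`. Since `μ / λ` is a horizontal strip,
`conj μ j ≤ conj λ j + 1`, and since `csK k λ j ≤ csK k μ j`, that range has at most one row.
-/

theorem hook_le_hook_of_le {f : ℕ → ℕ} (hf : Antitone f) {i i' : ℕ} (j : ℕ) (hii' : i ≤ i') :
    hook f (i', j) ≤ hook f (i, j) := by
  have := hf hii'
  simp only [hook]
  omega

namespace IsPartition

variable {f : ℕ → ℕ}

theorem antitone (hf : IsPartition f) : Antitone f := fun _ _ h => hf.1 _ _ h

theorem finite_setOf_lt (hf : IsPartition f) (j : ℕ) : {i | j < f i}.Finite := by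
  obtain ⟨N, hN⟩ := hf.2
  refine (Set.finite_Iio N).subset fun i (hi : j < f i) => ?_
  by_contra hiN
  have := hN i (not_lt.1 hiN)
  omega

theorem lt_iff_lt_conj (hf : IsPartition f) (i j : ℕ) : j < f i ↔ i < conj f j := by
  have hconj : conj f j = {i | j < f i}.ncard := (Nat.card_coe_set_eq _)
  constructor
  · intro hij
    have hsub : Set.Iic i ⊆ {i | j < f i} := fun i' hi' => hij.trans_le (hf.antitone hi')
    have := Set.ncard_le_ncard hsub (hf.finite_setOf_lt j)
    rw [Set.ncard_Iic_nat] at this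
    omega
  · intro hic
    by_contra hij
    have hsub : {i | j < f i} ⊆ Set.Iio i := fun i' hi' =>
      lt_of_not_ge fun hii' => hij (lt_of_lt_of_le hi' (hf.antitone hii'))
    have := Set.ncard_le_ncard hsub (Set.finite_Iio i)
    rw [Set.ncard_Iio_nat] at this
    omega

theorem mem_bdry_iff (hf : IsPartition f) (k : ℕ) (i j : ℕ) :
    (i, j) ∈ bdry k f ↔ i < conj f j ∧ conj f j ≤ i + csK k f j := by
  have hcs : csK k f j = {i | (i, j) ∈ bdry k f}.ncard := (Nat.card_coe_set_eq _)
  have hfin : {i | (i, j) ∈ bdry k f}.Finite :=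
    (hf.finite_setOf_lt j).subset fun _ hi => hi.1
  have mem_of_le {i i' : ℕ} (hb : (i, j) ∈ bdry k f) (hii' : i ≤ i') (hi' : i' < conj f j) :
      (i', j) ∈ bdry k f :=
    ⟨(hf.lt_iff_lt_conj i' j).2 hi', (hook_le_hook_of_le hf.antitone j hii').trans hb.2⟩
  constructor
  · intro hb
    have hic := (hf.lt_iff_lt_conj i j).1 hb.1
    have hsub : Set.Ico i (conj f j) ⊆ {i | (i, j) ∈ bdry k f} :=
      fun i' hi' => mem_of_le hb hi'.1 hi'.2
    have := Set.ncard_le_ncard hsub hfin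
    rw [Set.ncard_Ico_nat] at this
    omega
  · rintro ⟨hic, hle⟩
    by_contra hb
    have hsub : {i | (i, j) ∈ bdry k f} ⊆ Set.Ioo i (conj f j) := fun i' hi' =>
      ⟨lt_of_not_ge fun hi'i => hb (mem_of_le hi' hi'i hic),
        (hf.lt_iff_lt_conj i' j).1 hi'.1⟩
    have := Set.ncard_le_ncard hsub (Set.finite_Ioo _ _)
    rw [Set.ncard_Ioo_nat] at this
    omega

end IsPartition

theorem conj_le_conj_add_one_of_oneCellPerCol {lam mu : ℕ → ℕ} (hlam : IsPartition lam)
    (hmu : IsPartition mu) (h : OneCellPerCol lam mu) (j : ℕ) : conj mu j ≤ conj lam j + 1 := by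
  by_contra! hlt
  have mem_diff {i : ℕ} (hi : conj lam j ≤ i) (hi' : i < conj mu j) :
      (i, j) ∈ cellsOf mu \ cellsOf lam :=
    ⟨(hmu.lt_iff_lt_conj i j).2 hi', fun hc => by
      have := (hlam.lt_iff_lt_conj i j).1 hc
      omega⟩
  have := h _ _ (mem_diff le_rfl (by omega)) (mem_diff (Nat.le_succ _) (by omega)) rfl
  simp at this

theorem statement_12_general (k : ℕ) (r : ℕ) (lam mu : ℕ → ℕ)
    (h : IsStrip k r lam mu) :
    ∀ x y : Cell, x ∈ bdry k lam \ bdry k mu → y ∈ bdry k lam \ bdry k mu →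
      x.2 = y.2 → x = y := by
  obtain ⟨⟨hlam, -⟩, ⟨hmu, -⟩, hle, hcol, -, -, hcs, -⟩ := h
  have hconj := conj_le_conj_add_one_of_oneCellPerCol hlam hmu hcol
  have row_bounds {i j : ℕ} (hx : (i, j) ∈ bdry k lam \ bdry k mu) :
      conj lam j ≤ i + csK k lam j ∧ i + csK k mu j < conj mu j := by
    obtain ⟨hx, hxmu⟩ := hx
    have hcell : i < conj mu j := (hmu.lt_iff_lt_conj i j).1 (hx.1.trans_le (hle i))
    rw [hmu.mem_bdry_iff, not_and, not_le] at hxmu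
    exact ⟨((hlam.mem_bdry_iff k i j).1 hx).2, hxmu hcell⟩
  rintro ⟨i, j⟩ ⟨i', j'⟩ hx hy (rfl : j = j')
  have := row_bounds hx
  have := row_bounds hy
  have := hconj j
  have := hcs j
  obtain rfl : i = i' := by omega
  rfl

/-- if `μ/λ` is a strip of `k`-shapes then `∂λ \ ∂μ` is a
horizontal strip (at most one cell in each column). -/
theorem statement_12 (k : ℕ) (hk : 2 ≤ k) (r : ℕ) (lam mu : ℕ → ℕ)
    (h : IsStrip k r lam mu) :
    ∀ x y : Cell, x ∈ bdry k lam \ bdry k mu → y ∈ bdry k lam \ bdry k mu →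
      x.2 = y.2 → x = y :=
  statement_12_general k r lam mu h
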